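/- Let R > 0 and let u, v : ℝ → ℝ be continuously differentiable functions with u, u', v, v' square integrable on ℝ, with u(x), v(x) → 0 as x → ±∞, and suppose ‖u‖_{L²(ℝ)} ≤ R, ‖u'‖_{L²(ℝ)} ≤ R, ‖v‖_{L²(ℝ)} ≤ R, ‖v'‖_{L²(ℝ)} ≤ R. Then | ∫_ℝ u(x)³ dx − ∫_ℝ v(x)³ dx | ≤ 3R² ‖u − v‖_{L²(ℝ)}. In particular, the mapping v ↦ ∫_ℝ v(x)³ dx is Lipschitz continuous in the L²(ℝ) metric on bounded sets of H¹(ℝ). -/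

import Mathlib

/-!
Writing `u(x)² = ∫_{-∞}^x 2uu' = -∫_x^∞ 2uu'` and applying Cauchy–Schwarz gives the Agmon bound
`u(x)² ≤ ‖u‖₂ ‖u'‖₂ ≤ R²`, so `|u|, |v| ≤ R`. Then `u³ - v³ = (u - v) w` with
`w = u² + uv + v²`, where `0 ≤ w ≤ 3R²` and `∫ w ≤ 3/2 (‖u‖₂² + ‖v‖₂²) ≤ 3R²`; hence
`‖w‖₂² ≤ 3R² ∫ w ≤ 9R⁴`, and Cauchy–Schwarz for `(u - v) w` concludes.
-/

open MeasureTheory Filter Set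

section MeasureSpace

variable {α : Type*} [MeasurableSpace α] {μ : Measure α}

theorem integral_abs_mul_le_sqrt_mul_sqrt {f g : α → ℝ} (hf : MemLp f 2 μ) (hg : MemLp g 2 μ) :
    ∫ x, |f x * g x| ∂μ ≤ √(∫ x, f x ^ 2 ∂μ) * √(∫ x, g x ^ 2 ∂μ) := by
  have h := integral_mul_norm_le_Lp_mul_Lq (μ := μ) Real.HolderConjugate.two_two
    (by simpa using hf) (by simpa using hg)
  simp only [Real.norm_eq_abs, Real.rpow_two, sq_abs] at h
  simpa only [abs_mul, Real.sqrt_eq_rpow] using h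

theorem integral_sq_le_mul_integral {w : α → ℝ} {M : ℝ} (hw : Integrable w μ)
    (hw0 : ∀ x, 0 ≤ w x) (hwM : ∀ x, w x ≤ M) :
    ∫ x, w x ^ 2 ∂μ ≤ M * ∫ x, w x ∂μ := by
  rw [← integral_const_mul]
  refine integral_mono_of_nonneg (.of_forall fun x => sq_nonneg _) (hw.const_mul M)
    (.of_forall fun x => ?_)
  simpa [sq] using mul_le_mul_of_nonneg_right (hwM x) (hw0 x)

theorem abs_integral_cube_sub_integral_cube_le {f g : α → ℝ} {A B : ℝ}
    (hf : MemLp f 2 μ) (hg : MemLp g 2 μ) (hA : 0 ≤ A)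
    (hfA : ∀ x, |f x| ≤ A) (hgA : ∀ x, |g x| ≤ A)
    (hfB : √(∫ x, f x ^ 2 ∂μ) ≤ B) (hgB : √(∫ x, g x ^ 2 ∂μ) ≤ B) :
    |(∫ x, f x ^ 3 ∂μ) - ∫ x, g x ^ 3 ∂μ| ≤ 3 * A * B * √(∫ x, (f x - g x) ^ 2 ∂μ) := by
  set w : α → ℝ := fun x => f x ^ 2 + f x * g x + g x ^ 2
  have hf2A : ∀ x, f x ^ 2 ≤ A ^ 2 := fun x => sq_le_sq.2 ((hfA x).trans (le_abs_self A))
  have hg2A : ∀ x, g x ^ 2 ≤ A ^ 2 := fun x => sq_le_sq.2 ((hgA x).trans (le_abs_self A))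
  have hw0 : ∀ x, 0 ≤ w x := fun x => by simp only [w]; nlinarith [sq_nonneg (f x + g x)]
  have hw_le : ∀ x, w x ≤ 3 / 2 * (f x ^ 2 + g x ^ 2) := fun x => by
    simp only [w]; nlinarith [sq_nonneg (f x - g x)]
  have hwA : ∀ x, w x ≤ 3 * A ^ 2 := fun x => by linarith [hw_le x, hf2A x, hg2A x]
  have hw : Integrable w μ := (hf.integrable_sq.add (hf.integrable_mul hg)).add hg.integrable_sq
  have hw2 : MemLp w 2 μ := (memLp_two_iff_integrable_sq hw.1).2 <| by
    simpa [sq] using hw.bdd_mul hw.1 (.of_forall fun x => (abs_of_nonneg (hw0 x)).trans_le (hwA x))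
  obtain ⟨-, hfB'⟩ := Real.sqrt_le_iff.1 hfB
  obtain ⟨hB, hgB'⟩ := Real.sqrt_le_iff.1 hgB
  have hwB : √(∫ x, w x ^ 2 ∂μ) ≤ 3 * A * B := by
    refine Real.sqrt_le_iff.2 ⟨by positivity, ?_⟩
    calc ∫ x, w x ^ 2 ∂μ ≤ 3 * A ^ 2 * ∫ x, w x ∂μ := integral_sq_le_mul_integral hw hw0 hwA
      _ ≤ 3 * A ^ 2 * (3 / 2 * ((∫ x, f x ^ 2 ∂μ) + ∫ x, g x ^ 2 ∂μ)) := by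
        gcongr
        rw [← integral_add hf.integrable_sq hg.integrable_sq, ← integral_const_mul]
        exact integral_mono hw ((hf.integrable_sq.add hg.integrable_sq).const_mul _) hw_le
      _ ≤ (3 * A * B) ^ 2 := by nlinarith
  have hcube : ∀ {h : α → ℝ}, MemLp h 2 μ → (∀ x, |h x| ≤ A) → Integrable (fun x => h x ^ 3) μ :=
    fun hh hhA => by simpa [pow_succ'] using hh.integrable_sq.bdd_mul hh.1 (.of_forall hhA)
  calc |(∫ x, f x ^ 3 ∂μ) - ∫ x, g x ^ 3 ∂μ| = |∫ x, (f x - g x) * w x ∂μ| := by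
        rw [← integral_sub (hcube hf hfA) (hcube hg hgA)]; congr 2 with x; ring
    _ ≤ ∫ x, |(f x - g x) * w x| ∂μ := abs_integral_le_integral_abs
    _ ≤ √(∫ x, (f x - g x) ^ 2 ∂μ) * √(∫ x, w x ^ 2 ∂μ) :=
        integral_abs_mul_le_sqrt_mul_sqrt (hf.sub hg) hw2
    _ ≤ 3 * A * B * √(∫ x, (f x - g x) ^ 2 ∂μ) := by
        rw [mul_comm]; gcongr

end MeasureSpace

section Real

variable {u : ℝ → ℝ}

theorem sq_le_sqrt_integral_sq_mul_sqrt_integral_deriv_sq (hu : Differentiable ℝ u)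
    (hu2 : MemLp u 2) (hu'2 : MemLp (deriv u) 2)
    (htop : Tendsto u atTop (nhds 0)) (hbot : Tendsto u atBot (nhds 0)) (x₀ : ℝ) :
    u x₀ ^ 2 ≤ √(∫ x, u x ^ 2) * √(∫ x, deriv u x ^ 2) := by
  set h : ℝ → ℝ := fun x => 2 * (u x * deriv u x)
  have hderiv : ∀ x, HasDerivAt (fun y => u y ^ 2) (h x) x := fun x => by
    simpa [h, mul_comm, mul_assoc, mul_left_comm] using (hu x).hasDerivAt.fun_pow 2
  have hint : Integrable h := (hu2.integrable_mul hu'2).const_mul 2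
  have hleft : u x₀ ^ 2 ≤ ∫ x in Iic x₀, |h x| := by
    have := integral_Iic_of_hasDerivAt_of_tendsto' (a := x₀) (fun x _ => hderiv x)
      hint.integrableOn (by simpa using hbot.pow 2)
    calc u x₀ ^ 2 = ∫ x in Iic x₀, h x := by simpa using this.symm
      _ ≤ ∫ x in Iic x₀, |h x| :=
        integral_mono hint.integrableOn hint.abs.integrableOn fun x => le_abs_self _
  have hright : u x₀ ^ 2 ≤ ∫ x in Ioi x₀, |h x| := by
    have := integral_Ioi_of_hasDerivAt_of_tendsto' (a := x₀) (fun x _ => hderiv x)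
      hint.integrableOn (by simpa using htop.pow 2)
    calc u x₀ ^ 2 = ∫ x in Ioi x₀, -h x := by rw [integral_neg, this]; ring
      _ ≤ ∫ x in Ioi x₀, |h x| :=
        integral_mono hint.integrableOn.neg hint.abs.integrableOn fun x => neg_le_abs _
  have hsplit := intervalIntegral.integral_Iic_add_Ioi (b := x₀)
    hint.abs.integrableOn hint.abs.integrableOn
  have habs : ∫ x, |h x| = 2 * ∫ x, |u x * deriv u x| := by
    simp only [h, abs_mul, abs_two]; exact integral_const_mul 2 _
  linarith [integral_abs_mul_le_sqrt_mul_sqrt hu2 hu'2]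

theorem abs_le_of_sqrt_integral_sq_le (hu : Differentiable ℝ u)
    (hu2 : MemLp u 2) (hu'2 : MemLp (deriv u) 2)
    (htop : Tendsto u atTop (nhds 0)) (hbot : Tendsto u atBot (nhds 0)) {R : ℝ}
    (huR : √(∫ x, u x ^ 2) ≤ R) (hu'R : √(∫ x, deriv u x ^ 2) ≤ R) (x : ℝ) : |u x| ≤ R := by
  have hR : 0 ≤ R := (Real.sqrt_nonneg _).trans huR
  refine abs_le_of_sq_le_sq ?_ hR
  calc u x ^ 2 ≤ √(∫ x, u x ^ 2) * √(∫ x, deriv u x ^ 2) :=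
        sq_le_sqrt_integral_sq_mul_sqrt_integral_deriv_sq hu hu2 hu'2 htop hbot x
    _ ≤ R ^ 2 := by rw [sq]; exact mul_le_mul huR hu'R (Real.sqrt_nonneg _) hR

end Real

theorem cube_integral_lipschitz_on_H1_bounded_general
    (R : ℝ)
    (u v : ℝ → ℝ) (hu : ContDiff ℝ 1 u) (hv : ContDiff ℝ 1 v)
    (hu2 : Integrable (fun x => (u x) ^ 2))
    (hu'2 : Integrable (fun x => (deriv u x) ^ 2))
    (hv2 : Integrable (fun x => (v x) ^ 2))
    (hv'2 : Integrable (fun x => (deriv v x) ^ 2))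
    (hutop : Tendsto u atTop (nhds 0)) (hubot : Tendsto u atBot (nhds 0))
    (hvtop : Tendsto v atTop (nhds 0)) (hvbot : Tendsto v atBot (nhds 0))
    (huR : Real.sqrt (∫ x, (u x) ^ 2) ≤ R)
    (hu'R : Real.sqrt (∫ x, (deriv u x) ^ 2) ≤ R)
    (hvR : Real.sqrt (∫ x, (v x) ^ 2) ≤ R)
    (hv'R : Real.sqrt (∫ x, (deriv v x) ^ 2) ≤ R) :
    |(∫ x, (u x) ^ 3) - ∫ x, (v x) ^ 3|
      ≤ 3 * R ^ 2 * Real.sqrt (∫ x, (u x - v x) ^ 2) := by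
  have hR : 0 ≤ R := (Real.sqrt_nonneg _).trans huR
  have hu_L2 := (memLp_two_iff_integrable_sq hu.continuous.aestronglyMeasurable).2 hu2
  have hv_L2 := (memLp_two_iff_integrable_sq hv.continuous.aestronglyMeasurable).2 hv2
  have hu'_L2 := (memLp_two_iff_integrable_sq (measurable_deriv u).aestronglyMeasurable).2 hu'2
  have hv'_L2 := (memLp_two_iff_integrable_sq (measurable_deriv v).aestronglyMeasurable).2 hv'2
  have hu_sup := abs_le_of_sqrt_integral_sq_le (hu.differentiable one_ne_zero) hu_L2 hu'_L2
    hutop hubot huR hu'R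
  have hv_sup := abs_le_of_sqrt_integral_sq_le (hv.differentiable one_ne_zero) hv_L2 hv'_L2
    hvtop hvbot hvR hv'R
  have h := abs_integral_cube_sub_integral_cube_le hu_L2 hv_L2 hR hu_sup hv_sup huR hvR
  rwa [mul_assoc 3 R R, ← sq] at h

/-- The map v ↦ ∫ v³ is Lipschitz in the L² metric on bounded sets of H¹. -/
theorem cube_integral_lipschitz_on_H1_bounded
    (R : ℝ) (hR : 0 < R)
    (u v : ℝ → ℝ) (hu : ContDiff ℝ 1 u) (hv : ContDiff ℝ 1 v)
    (hu2 : Integrable (fun x => (u x) ^ 2))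
    (hu'2 : Integrable (fun x => (deriv u x) ^ 2))
    (hv2 : Integrable (fun x => (v x) ^ 2))
    (hv'2 : Integrable (fun x => (deriv v x) ^ 2))
    (hutop : Tendsto u atTop (nhds 0)) (hubot : Tendsto u atBot (nhds 0))
    (hvtop : Tendsto v atTop (nhds 0)) (hvbot : Tendsto v atBot (nhds 0))
    (huR : Real.sqrt (∫ x, (u x) ^ 2) ≤ R)
    (hu'R : Real.sqrt (∫ x, (deriv u x) ^ 2) ≤ R)
    (hvR : Real.sqrt (∫ x, (v x) ^ 2) ≤ R)
    (hv'R : Real.sqrt (∫ x, (deriv v x) ^ 2) ≤ R) :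
    |(∫ x, (u x) ^ 3) - ∫ x, (v x) ^ 3|
      ≤ 3 * R ^ 2 * Real.sqrt (∫ x, (u x - v x) ^ 2) :=
  cube_integral_lipschitz_on_H1_bounded_general R u v hu hv hu2 hu'2 hv2 hv'2 hutop hubot hvtop
    hvbot huR hu'R hvR hv'R
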